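/- Fix n ≥ 2, let G be a graph, ω a placement function on G, and f : V(G) → V(C) satisfying (C1) and (C2). Suppose C(ℓ,j) with j ≥ 2 is a reversal point (of start type or end type), and let H₁ and H₂ be the two connected components of the graph obtained from C by deleting the vertex C(ℓ,j). Then for any wrapping pattern w_0,…,w_k in G, either f(w_p) ∈ H₁ ∪ {C(ℓ,j)} for all p ∈ {0,…,k}, or f(w_p) ∈ H₂ ∪ {C(ℓ,j)} for all p ∈ {0,…,k}. -/

import Mathlib

/-- Vertices of the infinite n-od graph `C`: a branch vertex, and nodes `C(ℓ,j)`
(intended for `1 ≤ ℓ ≤ n`, `j ≥ 1`). -/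
inductive NOdVert : Type where
  | branch : NOdVert
  | node : ℕ → ℕ → NOdVert
deriving DecidableEq

/-- `cv ℓ j` denotes the vertex `C(ℓ,j)`, where `C(ℓ,0)` is the branch vertex. -/
def cv (ℓ j : ℕ) : NOdVert := if j = 0 then NOdVert.branch else NOdVert.node ℓ j

/-- Adjacency in the infinite n-od `C`: `C(ℓ,j)` is adjacent to `C(ℓ,j+1)` for
`1 ≤ ℓ ≤ n` and `j ≥ 0` (the case `j = 0` gives branch–`C(ℓ,1)` edges). -/
def nodAdj (n : ℕ) (u v : NOdVert) : Prop :=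
  ∃ ℓ j, 1 ≤ ℓ ∧ ℓ ≤ n ∧
    ((u = cv ℓ j ∧ v = cv ℓ (j + 1)) ∨ (v = cv ℓ j ∧ u = cv ℓ (j + 1)))

/-- The point `b(i,t) = ((1+t)cos(iπ/n), (1+t)sin(iπ/n))` in the plane. -/
noncomputable def bpt (n i : ℕ) (t : ℝ) : ℝ × ℝ :=
  ((1 + t) * Real.cos (i * Real.pi / n), (1 + t) * Real.sin (i * Real.pi / n))

/-- The origin `o` of the plane. -/
def origin : ℝ × ℝ := (0, 0)

/-- A placement function: on each edge of `G`, one endpoint maps to `o` and the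
other to some `b(i,t)` with `i ∈ {0,…,n}`, `t ∈ [0,1]`. -/
def IsPlacement {V : Type*} (n : ℕ) (G : SimpleGraph V) (ω : V → ℝ × ℝ) : Prop :=
  ∀ u v, G.Adj u v →
    (ω u = origin ∧ ∃ i ≤ n, ∃ t ∈ Set.Icc (0 : ℝ) 1, ω v = bpt n i t) ∨
    (ω v = origin ∧ ∃ i ≤ n, ∃ t ∈ Set.Icc (0 : ℝ) 1, ω u = bpt n i t)

/-- Condition (C1). -/
def CondC1 {V : Type*} (n : ℕ) (ω : V → ℝ × ℝ) (f : V → NOdVert) : Prop :=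
  ∀ u v, f u = f v →
    (ω u = origin ∧ ω v = origin) ∨
    ∃ i ≤ n, ∃ s ∈ Set.Icc (0 : ℝ) 1, ∃ t ∈ Set.Icc (0 : ℝ) 1,
      ω u = bpt n i s ∧ ω v = bpt n i t

/-- Condition (C2): `f` maps adjacent vertices of `G` to adjacent vertices of `C`. -/
def CondC2 {V : Type*} (n : ℕ) (G : SimpleGraph V) (f : V → NOdVert) : Prop :=
  ∀ u v, G.Adj u v → nodAdj n (f u) (f v)

/-- `w 0, …, w k` is a wrapping pattern in `G` for the placement function `ω`. -/
def IsWrapping {V : Type*} (n : ℕ) (G : SimpleGraph V) (ω : V → ℝ × ℝ)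
    (w : ℕ → V) (k : ℕ) : Prop :=
  0 < k ∧ 2 * (n + 1) ∣ k ∧
  (∀ p < k, G.Adj (w p) (w (p + 1))) ∧
  (∀ q, 2 * q ≤ k → ∃ t ∈ Set.Icc (0 : ℝ) 1, ω (w (2 * q)) = bpt n (q % (n + 1)) t) ∧
  (∀ q, 2 * q + 1 ≤ k → ω (w (2 * q + 1)) = origin)

/-- The branch-star of `C`: the branch vertex together with `C(ℓ,1)`, `1 ≤ ℓ ≤ n`. -/
def branchStar (n : ℕ) : Set NOdVert :=
  {NOdVert.branch} ∪ {x | ∃ ℓ, 1 ≤ ℓ ∧ ℓ ≤ n ∧ x = NOdVert.node ℓ 1}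

/-!
By (C1) the fibre of `f` over a vertex of `C` lies either over `o` or on a single ray `b(i,·)`.
At a reversal point `C(ℓ,j)` two wrapping patterns leave the fibre over `C(ℓ,j)`, which lies on
ray `0`, in opposite directions along the leg, so the fibres over `C(ℓ,j-2)` and `C(ℓ,j+2)` lie on
a common ray `r` (`r = 1` for the start type, `r = n` for the end type). A wrapping pattern
meeting both `H₁` and `H₂` passes through the cut vertex `C(ℓ,j)` at an interior position `2q`,
so `q ≡ 0 mod (n+1)`; its vertices at positions `2q - 2` and `2q + 2` lie on rays `n` and `1` and
map to one of `C(ℓ,j-2)`, `C(ℓ,j)`, `C(ℓ,j+2)`, whose fibres lie on rays `r` and `0`. Since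
`n ≥ 2`, one of `n`, `1` differs from both, a contradiction.
-/

lemma bpt_ne_origin {n i : ℕ} {t : ℝ} (ht : 0 ≤ t) : bpt n i t ≠ origin := by
  intro h
  have hx : (1 + t) * Real.cos (i * Real.pi / n) = 0 := congrArg Prod.fst h
  have hy : (1 + t) * Real.sin (i * Real.pi / n) = 0 := congrArg Prod.snd h
  have : (1 + t) ^ 2 = 0 := by
    linear_combination (1 + t) * Real.cos (i * Real.pi / n) * hx
      + (1 + t) * Real.sin (i * Real.pi / n) * hy
      - (1 + t) ^ 2 * Real.sin_sq_add_cos_sq (i * Real.pi / n)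
  nlinarith

lemma bpt_angle_mem_Icc {n i : ℕ} (hn : 1 ≤ n) (hi : i ≤ n) :
    (i : ℝ) * Real.pi / n ∈ Set.Icc 0 Real.pi := by
  have hn' : (0 : ℝ) < n := by exact_mod_cast hn
  have hi' : (i : ℝ) ≤ n := by exact_mod_cast hi
  refine ⟨by positivity, ?_⟩
  rw [div_le_iff₀ hn']
  nlinarith [Real.pi_pos]

lemma bpt_index_eq {n i i' : ℕ} {s s' : ℝ} (hn : 1 ≤ n) (hi : i ≤ n) (hi' : i' ≤ n)
    (hs : 0 ≤ s) (hs' : 0 ≤ s') (h : bpt n i s = bpt n i' s') : i = i' := by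
  set θ := (i : ℝ) * Real.pi / n
  set θ' := (i' : ℝ) * Real.pi / n
  have hx : (1 + s) * Real.cos θ = (1 + s') * Real.cos θ' := congrArg Prod.fst h
  have hy : (1 + s) * Real.sin θ = (1 + s') * Real.sin θ' := congrArg Prod.snd h
  have hss' : s = s' := by
    have : (s - s') * (2 + s + s') = 0 := by
      linear_combination ((1 + s) * Real.cos θ + (1 + s') * Real.cos θ') * hx
        + ((1 + s) * Real.sin θ + (1 + s') * Real.sin θ') * hy
        - (1 + s) ^ 2 * Real.sin_sq_add_cos_sq θ + (1 + s') ^ 2 * Real.sin_sq_add_cos_sq θ'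
    rcases mul_eq_zero.1 this with h | h <;> linarith
  subst hss'
  have hcos : Real.cos θ = Real.cos θ' := mul_left_cancel₀ (by linarith) hx
  have hθ := Real.injOn_cos (bpt_angle_mem_Icc hn hi) (bpt_angle_mem_Icc hn hi') hcos
  have hn' : (n : ℝ) ≠ 0 := by positivity
  field_simp [θ, θ', Real.pi_ne_zero] at hθ
  exact_mod_cast hθ

lemma exists_not_iff_succ_of_not_iff {P : ℕ → Prop} {a b : ℕ} (hab : a ≤ b)
    (h : ¬(P a ↔ P b)) : ∃ i, a ≤ i ∧ i < b ∧ ¬(P i ↔ P (i + 1)) := by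
  induction b, hab using Nat.le_induction with
  | base => exact absurd Iff.rfl h
  | succ b hab ih =>
    by_cases hb : P a ↔ P b
    · exact ⟨b, hab, b.lt_succ_self, fun h' => h (hb.trans h')⟩
    · obtain ⟨i, hai, hib, hi⟩ := ih hb
      exact ⟨i, hai, by omega, hi⟩

namespace NOdVert

lemma cv_of_pos {ℓ m : ℕ} (hm : 1 ≤ m) : cv ℓ m = node ℓ m := if_neg (by omega)

lemma nodAdj_symm {n : ℕ} {x y : NOdVert} (h : nodAdj n x y) : nodAdj n y x := by
  obtain ⟨ℓ, j, h₁, h₂, h⟩ := h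
  exact ⟨ℓ, j, h₁, h₂, h.symm⟩

lemma eq_of_nodAdj_node {n ℓ j : ℕ} {x : NOdVert} (hj : 1 ≤ j) (h : nodAdj n (node ℓ j) x) :
    x = cv ℓ (j - 1) ∨ x = node ℓ (j + 1) := by
  obtain ⟨ℓ', j', -, -, ⟨hv, hx⟩ | ⟨hx, hv⟩⟩ := h
  · by_cases hj' : j' = 0
    · simp [cv, hj'] at hv
    · simp only [cv, if_neg hj', node.injEq] at hv
      obtain ⟨rfl, rfl⟩ := hv
      exact Or.inr (hx.trans (cv_of_pos (by omega)))
  · simp only [cv, Nat.add_one_ne_zero, if_false, node.injEq] at hv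
    obtain ⟨rfl, rfl⟩ := hv
    exact Or.inl (by simpa using hx)

lemma nodAdj_two_step {n ℓ j : ℕ} {x y : NOdVert} (hj : 2 ≤ j)
    (hx : nodAdj n (node ℓ j) x) (hy : nodAdj n x y) :
    y = node ℓ j ∨ (x = node ℓ (j - 1) ∧ y = cv ℓ (j - 2)) ∨
      (x = node ℓ (j + 1) ∧ y = node ℓ (j + 2)) := by
  rcases eq_of_nodAdj_node (by omega) hx with rfl | rfl
  · rw [cv_of_pos (by omega)] at hy ⊢
    rcases eq_of_nodAdj_node (by omega) hy with rfl | rfl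
    · exact Or.inr (Or.inl ⟨rfl, rfl⟩)
    · exact Or.inl (by rw [Nat.sub_add_cancel (by omega)])
  · rcases eq_of_nodAdj_node (by omega) hy with rfl | rfl
    · exact Or.inl (by rw [Nat.add_sub_cancel, cv_of_pos (by omega)])
    · exact Or.inr (Or.inr ⟨rfl, rfl⟩)

/-- The vertices `C(ℓ,j')`, `j' > j`: the component `H₁` of `C - C(ℓ,j)`. -/
def beyond (ℓ j : ℕ) : Set NOdVert := {x | ∃ j', j < j' ∧ x = node ℓ j'}

lemma node_notMem_beyond (ℓ j : ℕ) : node ℓ j ∉ beyond ℓ j := by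
  rintro ⟨j', hj', h⟩
  cases h
  omega

lemma eq_node_of_nodAdj_of_mem_beyond {n ℓ j : ℕ} {x y : NOdVert} (hj : 1 ≤ j)
    (h : nodAdj n x y) (hx : x ∈ beyond ℓ j) (hy : y ∉ beyond ℓ j) : y = node ℓ j := by
  obtain ⟨j', hj', rfl⟩ := hx
  rcases eq_of_nodAdj_node (by omega) h with rfl | rfl
  · rw [cv_of_pos (by omega)] at hy ⊢
    have : ¬ j < j' - 1 := fun hlt => hy ⟨j' - 1, hlt, rfl⟩
    rw [show j' - 1 = j by omega]
  · exact absurd ⟨j' + 1, by omega, rfl⟩ hy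

lemma exists_eq_node_of_walk {n ℓ j k : ℕ} {c : ℕ → NOdVert} (hj : 1 ≤ j)
    (hc : ∀ i < k, nodAdj n (c i) (c (i + 1))) {a b : ℕ} (ha : a ≤ k) (hb : b ≤ k)
    (hca : c a ∈ beyond ℓ j) (hcb : c b ∉ beyond ℓ j) (hcb' : c b ≠ node ℓ j) :
    ∃ p, 0 < p ∧ p < k ∧ c p = node ℓ j := by
  have hchange : ¬(c (min a b) ∈ beyond ℓ j ↔ c (max a b) ∈ beyond ℓ j) := by
    rcases le_total a b with h | h
    · simpa [h] using fun h' => hcb (h'.1 hca)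
    · simpa [h] using fun h' => hcb (h'.2 hca)
  obtain ⟨i, hi, hi', hflip⟩ :=
    exists_not_iff_succ_of_not_iff (P := (c · ∈ beyond ℓ j)) min_le_max hchange
  obtain ⟨p, hp, hp', hcp⟩ : ∃ p, min a b ≤ p ∧ p ≤ max a b ∧ c p = node ℓ j := by
    have hadj := hc i (by omega)
    by_cases hmem : c i ∈ beyond ℓ j
    · exact ⟨i + 1, by omega, by omega,
        eq_node_of_nodAdj_of_mem_beyond hj hadj hmem fun h => hflip (iff_of_true hmem h)⟩
    · exact ⟨i, by omega, by omega, eq_node_of_nodAdj_of_mem_beyond hj (nodAdj_symm hadj)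
        (not_not.1 fun h => hflip (iff_of_false hmem h)) hmem⟩
  have hpa : p ≠ a := by rintro rfl; exact node_notMem_beyond ℓ j (hcp ▸ hca)
  have hpb : p ≠ b := by rintro rfl; exact hcb' hcp
  exact ⟨p, by omega, by omega, hcp⟩

end NOdVert

lemma Nat.sub_one_mod_of_dvd {n q : ℕ} (h : n + 1 ∣ q) (hq : 0 < q) :
    (q - 1) % (n + 1) = n := by
  obtain ⟨m, rfl⟩ := h
  obtain ⟨m, rfl⟩ := Nat.exists_eq_succ_of_ne_zero (n := m) (by rintro rfl; simp at hq)
  rw [Nat.succ_eq_add_one, mul_add_one, show (n + 1) * m + (n + 1) - 1 = (n + 1) * m + n by omega,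
    Nat.mul_add_mod, Nat.mod_eq_of_lt n.lt_succ_self]

lemma Nat.add_one_mod_of_dvd {n q : ℕ} (h : n + 1 ∣ q) (hn : 1 ≤ n) :
    (q + 1) % (n + 1) = 1 := by
  obtain ⟨m, rfl⟩ := h
  rw [Nat.mul_add_mod, Nat.mod_eq_of_lt (by omega)]

section Placement

variable {V : Type*} {n : ℕ} {G : SimpleGraph V} {ω : V → ℝ × ℝ} {f : V → NOdVert}

open NOdVert

/-- By (C1), once one vertex over `c` is placed on the ray `b(r,·)`, the whole fibre over `c`
lies on that ray. -/
def FiberOnRay (n : ℕ) (ω : V → ℝ × ℝ) (f : V → NOdVert) (c : NOdVert) (r : ℕ) : Prop :=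
  ∃ x, f x = c ∧ ∃ t ∈ Set.Icc (0 : ℝ) 1, ω x = bpt n r t

namespace CondC1

lemma ne_origin (h1 : CondC1 n ω f) {c : NOdVert} {r : ℕ} (hc : FiberOnRay n ω f c r)
    {y : V} (hy : f y = c) : ω y ≠ origin := by
  obtain ⟨x, hx, t, ht, hωx⟩ := hc
  rcases h1 x y (hx.trans hy.symm) with ⟨hx0, -⟩ | ⟨i, -, s, hs, s', hs', -, hωy⟩
  · exact fun _ => bpt_ne_origin ht.1 (hωx.symm.trans hx0)
  · exact hωy ▸ bpt_ne_origin hs'.1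

lemma ray_eq (h1 : CondC1 n ω f) (hn : 1 ≤ n) {c : NOdVert} {r r' : ℕ} (hr : r ≤ n)
    (hr' : r' ≤ n) (hc : FiberOnRay n ω f c r) (hc' : FiberOnRay n ω f c r') : r = r' := by
  obtain ⟨x, hx, t, ht, hωx⟩ := hc
  obtain ⟨y, hy, t', ht', hωy⟩ := hc'
  rcases h1 x y (hx.trans hy.symm) with ⟨hx0, -⟩ | ⟨i, hi, s, hs, s', hs', hωx', hωy'⟩
  · exact absurd (hωx.symm.trans hx0) (bpt_ne_origin ht.1)
  · have := bpt_index_eq hn hr hi ht.1 hs.1 (hωx.symm.trans hωx')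
    have := bpt_index_eq hn hr' hi ht'.1 hs'.1 (hωy.symm.trans hωy')
    omega

end CondC1

namespace IsWrapping

variable {w : ℕ → V} {k : ℕ}

lemma fiberOnRay (hw : IsWrapping n G ω w k) {p q i : ℕ} (hpq : p = 2 * q) (hpk : p ≤ k)
    (hqi : q % (n + 1) = i) : FiberOnRay n ω f (f (w p)) i :=
  ⟨_, rfl, hpq ▸ hqi ▸ hw.2.2.2.1 q (hpq ▸ hpk)⟩

lemma two_mul_le (hw : IsWrapping n G ω w k) : 2 * (n + 1) ≤ k :=
  Nat.le_of_dvd hw.1 hw.2.1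

lemma nodAdj_succ (h2 : CondC2 n G f) (hw : IsWrapping n G ω w k) {p : ℕ} (hp : p < k) :
    nodAdj n (f (w p)) (f (w (p + 1))) :=
  h2 _ _ (hw.2.2.1 p hp)

lemma nodAdj_pred (h2 : CondC2 n G f) (hw : IsWrapping n G ω w k) {p : ℕ} (hp : 0 < p)
    (hpk : p ≤ k) : nodAdj n (f (w p)) (f (w (p - 1))) := by
  have h := hw.nodAdj_succ h2 (p := p - 1) (by omega)
  rw [Nat.sub_add_cancel hp] at h
  exact nodAdj_symm h

lemma two_dvd (hw : IsWrapping n G ω w k) : 2 ∣ k :=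
  (Dvd.intro _ rfl).trans hw.2.1

lemma fiberOnRay_flank (h1 : CondC1 n ω f) (hn : 1 ≤ n) (hw : IsWrapping n G ω w k) {p : ℕ}
    (h0 : FiberOnRay n ω f (f (w p)) 0) (hp : 0 < p) (hpk : p < k) :
    2 ≤ p ∧ p + 2 ≤ k ∧ FiberOnRay n ω f (f (w (p - 2))) n ∧
      FiberOnRay n ω f (f (w (p + 2))) 1 := by
  obtain ⟨q, rfl⟩ : 2 ∣ p := by
    by_contra hodd
    obtain ⟨q, rfl⟩ : Odd p := Nat.odd_iff.2 (by omega)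
    exact h1.ne_origin h0 rfl (hw.2.2.2.2 q (by omega))
  have hq : n + 1 ∣ q := Nat.dvd_of_mod_eq_zero
    (h1.ray_eq hn (Nat.le_of_lt_succ (Nat.mod_lt _ n.succ_pos)) n.zero_le
      (hw.fiberOnRay rfl (by omega) rfl) h0)
  have hqk : 2 * q + 2 ≤ k := by
    obtain ⟨c, rfl⟩ := hw.two_dvd
    omega
  refine ⟨by omega, hqk, ?_, ?_⟩
  · exact hw.fiberOnRay (q := q - 1) (by omega) (by omega) (Nat.sub_one_mod_of_dvd hq (by omega))
  · exact hw.fiberOnRay (q := q + 1) (by omega) hqk (Nat.add_one_mod_of_dvd hq hn)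

end IsWrapping

lemma fiberOnRay_of_diverging {ℓ j r : ℕ} (h1 : CondC1 n ω f) (hn : 1 ≤ n) (hj : 2 ≤ j)
    (hr0 : r ≠ 0) (hrn : r ≤ n) (h0 : FiberOnRay n ω f (node ℓ j) 0)
    {x y x' y' : NOdVert} (hx : nodAdj n (node ℓ j) x) (hy : nodAdj n x y)
    (hx' : nodAdj n (node ℓ j) x') (hy' : nodAdj n x' y') (hne : x ≠ x')
    (hyr : FiberOnRay n ω f y r) (hyr' : FiberOnRay n ω f y' r) :
    FiberOnRay n ω f (cv ℓ (j - 2)) r ∧ FiberOnRay n ω f (node ℓ (j + 2)) r := by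
  have not_back : ∀ {z}, FiberOnRay n ω f z r → z ≠ node ℓ j := by
    rintro z hz rfl
    exact hr0 (h1.ray_eq hn hrn n.zero_le hz h0)
  rcases nodAdj_two_step hj hx hy with hback | ⟨rfl, rfl⟩ | ⟨rfl, rfl⟩ <;>
    rcases nodAdj_two_step hj hx' hy' with hback' | ⟨rfl, rfl⟩ | ⟨rfl, rfl⟩
  all_goals first
    | exact absurd hback (not_back hyr)
    | exact absurd hback' (not_back hyr')
    | exact absurd rfl hne
    | exact ⟨hyr, hyr'⟩
    | exact ⟨hyr', hyr⟩

namespace IsWrapping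

variable {u v w : ℕ → V} {k₁ k₂ k : ℕ}

lemma fiberOnRay_of_start_reversal {ℓ j : ℕ} (h1 : CondC1 n ω f) (h2 : CondC2 n G f)
    (hn : 1 ≤ n) (hj : 2 ≤ j) (hu : IsWrapping n G ω u k₁) (hv : IsWrapping n G ω v k₂)
    (hu0 : f (u 0) = node ℓ j) (hv0 : f (v 0) = node ℓ j) (hne : f (u 1) ≠ f (v 1)) :
    FiberOnRay n ω f (node ℓ j) 0 ∧ FiberOnRay n ω f (cv ℓ (j - 2)) 1 ∧
      FiberOnRay n ω f (node ℓ (j + 2)) 1 := by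
  have hk₁ := hu.two_mul_le
  have hk₂ := hv.two_mul_le
  have h0 : FiberOnRay n ω f (node ℓ j) 0 := hu0 ▸ hu.fiberOnRay (q := 0) rfl (by omega) rfl
  refine ⟨h0, fiberOnRay_of_diverging h1 hn hj one_ne_zero hn h0
    (hu0 ▸ hu.nodAdj_succ h2 (by omega)) (hu.nodAdj_succ h2 (by omega))
    (hv0 ▸ hv.nodAdj_succ h2 (by omega)) (hv.nodAdj_succ h2 (by omega)) hne
    (hu.fiberOnRay (q := 1) rfl (by omega) (Nat.mod_eq_of_lt (by omega)))
    (hv.fiberOnRay (q := 1) rfl (by omega) (Nat.mod_eq_of_lt (by omega)))⟩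

lemma fiberOnRay_of_end_reversal {ℓ j : ℕ} (h1 : CondC1 n ω f) (h2 : CondC2 n G f)
    (hn : 1 ≤ n) (hj : 2 ≤ j) (hu : IsWrapping n G ω u k₁) (hv : IsWrapping n G ω v k₂)
    (hu0 : f (u k₁) = node ℓ j) (hv0 : f (v k₂) = node ℓ j)
    (hne : f (u (k₁ - 1)) ≠ f (v (k₂ - 1))) :
    FiberOnRay n ω f (node ℓ j) 0 ∧ FiberOnRay n ω f (cv ℓ (j - 2)) n ∧
      FiberOnRay n ω f (node ℓ (j + 2)) n := by
  have hend : ∀ {z : ℕ → V} {k' : ℕ}, IsWrapping n G ω z k' →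
      FiberOnRay n ω f (f (z k')) 0 ∧ FiberOnRay n ω f (f (z (k' - 2))) n := by
    intro z k' hz
    obtain ⟨c, hc⟩ := hz.2.1
    have hk' := hz.two_mul_le
    have hq : 0 < (n + 1) * c := by nlinarith
    exact ⟨hz.fiberOnRay (q := (n + 1) * c) (by rw [hc]; ring) le_rfl (Nat.mul_mod_right _ _),
      hz.fiberOnRay (q := (n + 1) * c - 1) (by rw [hc, mul_assoc]; omega) (by omega)
        (Nat.sub_one_mod_of_dvd (Dvd.intro c rfl) hq)⟩
  have hk₁ := hu.two_mul_le
  have hk₂ := hv.two_mul_le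
  have h0 : FiberOnRay n ω f (node ℓ j) 0 := hu0 ▸ (hend hu).1
  have hpred : ∀ {z : ℕ → V} {k' : ℕ}, IsWrapping n G ω z k' → 2 ≤ k' →
      nodAdj n (f (z (k' - 1))) (f (z (k' - 2))) := by
    intro z k' hz hk'
    simpa [Nat.sub_sub] using hz.nodAdj_pred h2 (p := k' - 1) (by omega) (by omega)
  exact ⟨h0, fiberOnRay_of_diverging h1 hn hj (by omega) le_rfl h0
    (hu0 ▸ hu.nodAdj_pred h2 (by omega) le_rfl) (hpred hu (by omega))
    (hv0 ▸ hv.nodAdj_pred h2 (by omega) le_rfl) (hpred hv (by omega)) hne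
    (hend hu).2 (hend hv).2⟩

lemma ne_node_of_reversal {ℓ j r : ℕ} (h1 : CondC1 n ω f) (h2 : CondC2 n G f) (hn : 2 ≤ n)
    (hj : 2 ≤ j) (h0 : FiberOnRay n ω f (node ℓ j) 0) (hr : r = 1 ∨ r = n)
    (hminus : FiberOnRay n ω f (cv ℓ (j - 2)) r) (hplus : FiberOnRay n ω f (node ℓ (j + 2)) r)
    (hw : IsWrapping n G ω w k) {p : ℕ} (hp : 0 < p) (hpk : p < k) :
    f (w p) ≠ node ℓ j := by
  intro hwp
  obtain ⟨hp2, hpk2, hleft, hright⟩ := hw.fiberOnRay_flank h1 (by omega) (hwp ▸ h0) hp hpk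
  have hrn : r ≤ n := by omega
  have off_ray : ∀ {x z r'}, FiberOnRay n ω f z r' → r' ≤ n → r' ≠ 0 → r' ≠ r →
      nodAdj n (node ℓ j) x → nodAdj n x z → False := by
    intro x z r' hz hr'n hr'0 hr'r hx hxz
    rcases nodAdj_two_step hj hx hxz with rfl | ⟨-, rfl⟩ | ⟨-, rfl⟩
    · exact hr'0 (h1.ray_eq (by omega) hr'n n.zero_le hz h0)
    · exact hr'r (h1.ray_eq (by omega) hr'n hrn hz hminus)
    · exact hr'r (h1.ray_eq (by omega) hr'n hrn hz hplus)
  rcases hr with rfl | rfl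
  · refine off_ray hleft le_rfl (by omega) (by omega) (hwp ▸ hw.nodAdj_pred h2 hp hpk.le) ?_
    simpa [Nat.sub_sub] using hw.nodAdj_pred h2 (p := p - 1) (by omega) (by omega)
  · exact off_ray hright (by omega) one_ne_zero (by omega) (hwp ▸ hw.nodAdj_succ h2 hpk)
      (hw.nodAdj_succ h2 (p := p + 1) (by omega))

end IsWrapping

end Placement

theorem stmt11_general {V : Type*} (n : ℕ) (hn : 2 ≤ n) (G : SimpleGraph V)
    (ω : V → ℝ × ℝ)
    (f : V → NOdVert) (h1 : CondC1 n ω f) (h2 : CondC2 n G f)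
    (ℓ j : ℕ) (hj : 2 ≤ j)
    (hrev :
      (∃ (u v : ℕ → V) (k₁ k₂ : ℕ), IsWrapping n G ω u k₁ ∧ IsWrapping n G ω v k₂ ∧
        f (u 0) = NOdVert.node ℓ j ∧ f (v 0) = NOdVert.node ℓ j ∧ f (u 1) ≠ f (v 1)) ∨
      (∃ (u v : ℕ → V) (k₁ k₂ : ℕ), IsWrapping n G ω u k₁ ∧ IsWrapping n G ω v k₂ ∧
        f (u k₁) = NOdVert.node ℓ j ∧ f (v k₂) = NOdVert.node ℓ j ∧
        f (u (k₁ - 1)) ≠ f (v (k₂ - 1))))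
    (w : ℕ → V) (k : ℕ) (hw : IsWrapping n G ω w k) :
    (∀ p ≤ k, f (w p) = NOdVert.node ℓ j ∨ ∃ j', j < j' ∧ f (w p) = NOdVert.node ℓ j') ∨
    (∀ p ≤ k, ¬ ∃ j', j < j' ∧ f (w p) = NOdVert.node ℓ j') := by
  obtain ⟨h0, r, hr, hminus, hplus⟩ : FiberOnRay n ω f (.node ℓ j) 0 ∧ ∃ r, (r = 1 ∨ r = n) ∧
      FiberOnRay n ω f (cv ℓ (j - 2)) r ∧ FiberOnRay n ω f (.node ℓ (j + 2)) r := by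
    rcases hrev with ⟨u, v, k₁, k₂, hu, hv, hu0, hv0, hne⟩ | ⟨u, v, k₁, k₂, hu, hv, hu0, hv0, hne⟩
    · obtain ⟨h0, hminus, hplus⟩ :=
        IsWrapping.fiberOnRay_of_start_reversal h1 h2 (by omega) hj hu hv hu0 hv0 hne
      exact ⟨h0, 1, Or.inl rfl, hminus, hplus⟩
    · obtain ⟨h0, hminus, hplus⟩ :=
        IsWrapping.fiberOnRay_of_end_reversal h1 h2 (by omega) hj hu hv hu0 hv0 hne
      exact ⟨h0, n, Or.inr rfl, hminus, hplus⟩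
  by_cases hH₁ : ∃ a ≤ k, f (w a) ∈ NOdVert.beyond ℓ j
  · left
    obtain ⟨a, ha, hfa⟩ := hH₁
    intro b hb
    by_contra hfb
    obtain ⟨hne, hH₂⟩ := not_or.1 hfb
    obtain ⟨p, hp, hpk, hfp⟩ := NOdVert.exists_eq_node_of_walk (c := f ∘ w) (by omega)
      (fun i hi => hw.nodAdj_succ h2 hi) ha hb hfa hH₂ hne
    exact hw.ne_node_of_reversal h1 h2 hn hj h0 hr hminus hplus hp hpk hfp
  · exact Or.inr fun p hp hfp => hH₁ ⟨p, hp, hfp⟩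

theorem stmt11 {V : Type*} (n : ℕ) (hn : 2 ≤ n) (G : SimpleGraph V)
    (ω : V → ℝ × ℝ) (hω : IsPlacement n G ω)
    (f : V → NOdVert) (h1 : CondC1 n ω f) (h2 : CondC2 n G f)
    (ℓ j : ℕ) (hℓ1 : 1 ≤ ℓ) (hℓn : ℓ ≤ n) (hj : 2 ≤ j)
    (hrev :
      (∃ (u v : ℕ → V) (k₁ k₂ : ℕ), IsWrapping n G ω u k₁ ∧ IsWrapping n G ω v k₂ ∧
        f (u 0) = NOdVert.node ℓ j ∧ f (v 0) = NOdVert.node ℓ j ∧ f (u 1) ≠ f (v 1)) ∨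
      (∃ (u v : ℕ → V) (k₁ k₂ : ℕ), IsWrapping n G ω u k₁ ∧ IsWrapping n G ω v k₂ ∧
        f (u k₁) = NOdVert.node ℓ j ∧ f (v k₂) = NOdVert.node ℓ j ∧
        f (u (k₁ - 1)) ≠ f (v (k₂ - 1))))
    (w : ℕ → V) (k : ℕ) (hw : IsWrapping n G ω w k) :
    (∀ p ≤ k, f (w p) = NOdVert.node ℓ j ∨ ∃ j', j < j' ∧ f (w p) = NOdVert.node ℓ j') ∨
    (∀ p ≤ k, ¬ ∃ j', j < j' ∧ f (w p) = NOdVert.node ℓ j') :=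
  stmt11_general n hn G ω f h1 h2 ℓ j hj hrev w k hw
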